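/- Let g_* ∈ (−1, 0) and f* > 0 and define t₀ = ln[(1/2)(1 − f*/g_*)] / ( ln[(1/4)(2 − f*/g_* − g_*/f*)] − ln(g_* + 1) ). If f* = M − 1 and g_* = ε − 1 with ε^{-1} = Θ(M^γ) for some γ > 0, then t₀ → 1/(γ+1) as M → ∞. Formally: with f* = M − 1 and g_* = M^{−γ} − 1, lim_{M → ∞} t₀(M) = 1/(γ+1). -/

import Mathlib

/-!
Both logarithm arguments grow linearly in `M`: since `f*/g_* ≈ -M`, the numerator's argument is
`≈ M/2` and the first one in the denominator is `≈ M/4`. Hence numerator and that term are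
`log M + O(1)`, while `-log(g_* + 1) = γ log M`, and dividing through by `log M` gives `1/(1 + γ)`.
-/

open Filter Real Topology

/-- The paper's `t₀`, with `f = f*` and `g = g_*`. -/
noncomputable def transitionTime (f g : ℝ) : ℝ :=
  log ((1/2) * (1 - f / g)) / (log ((1/4) * (2 - f / g - g / f)) - log (g + 1))

theorem tendsto_log_div_log_of_tendsto_div_self {f : ℝ → ℝ} {c : ℝ}
    (hf : Tendsto (fun x => f x / x) atTop (𝓝 c)) (hc : c ≠ 0) :
    Tendsto (fun x => log (f x) / log x) atTop (𝓝 1) := by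
  have hlog : Tendsto (fun x => log (f x / x) / log x + 1) atTop (𝓝 (0 + 1)) :=
    ((hf.log hc).div_atTop tendsto_log_atTop).add_const 1
  rw [zero_add] at hlog
  refine hlog.congr' ?_
  filter_upwards [hf.eventually_ne hc, eventually_gt_atTop 1] with x hfx hx
  have hlogx : log x ≠ 0 := (log_pos hx).ne'
  rw [div_add_one hlogx, ← log_mul hfx (by positivity), div_mul_cancel₀ _ (by positivity)]

theorem tendsto_transitionTime {f g : ℝ → ℝ} {γ : ℝ} (hγ : γ + 1 ≠ 0)
    (hf : Tendsto (fun M => f M / M) atTop (𝓝 1)) (hg : Tendsto g atTop (𝓝 (-1)))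
    (hgγ : Tendsto (fun M => log (g M + 1) / log M) atTop (𝓝 (-γ))) :
    Tendsto (fun M => transitionTime (f M) (g M)) atTop (𝓝 (1 / (γ + 1))) := by
  have hinv : Tendsto (fun M : ℝ => M⁻¹) atTop (𝓝 0) := tendsto_inv_atTop_zero
  have hf_top : Tendsto f atTop atTop := Tendsto.num tendsto_id one_pos hf
  have hfg : Tendsto (fun M => f M / M / g M) atTop (𝓝 (1 / -1)) := hf.div hg (by norm_num)
  rw [one_div_neg_one_eq_neg_one] at hfg
  have hnum : Tendsto (fun M => (1/2) * (1 - f M / g M) / M) atTop (𝓝 (1/2)) := by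
    have h := (hinv.sub hfg).const_mul (1/2)
    norm_num at h
    exact h.congr fun M => by ring
  have hden : Tendsto (fun M => (1/4) * (2 - f M / g M - g M / f M) / M) atTop (𝓝 (1/4)) := by
    have hgf : Tendsto (fun M => g M / f M / M) atTop (𝓝 0) :=
      (hg.div_atTop hf_top).div_atTop tendsto_id
    have h := (((hinv.const_mul 2).sub hfg).sub hgf).const_mul (1/4)
    norm_num at h
    exact h.congr fun M => by ring
  have hlogNum := tendsto_log_div_log_of_tendsto_div_self hnum (by norm_num)
  have hlogDen := (tendsto_log_div_log_of_tendsto_div_self hden (by norm_num)).sub hgγ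
  rw [sub_neg_eq_add, add_comm] at hlogDen
  refine (hlogNum.div hlogDen hγ).congr' ?_
  filter_upwards [eventually_gt_atTop 1] with M hM
  rw [Pi.div_apply, transitionTime, ← sub_div, div_div_div_cancel_right₀ (log_pos hM).ne']

theorem stmt_16 (γ : ℝ) (hγ : 0 < γ) :
    Filter.Tendsto
      (fun M : ℝ =>
        Real.log ((1/2) * (1 - (M - 1) / (M ^ (-γ) - 1))) /
          (Real.log ((1/4) * (2 - (M - 1) / (M ^ (-γ) - 1) - (M ^ (-γ) - 1) / (M - 1))) -
            Real.log ((M ^ (-γ) - 1) + 1)))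
      Filter.atTop (nhds (1 / (γ + 1))) := by
  have hf : Tendsto (fun M : ℝ => (M - 1) / M) atTop (𝓝 1) := by
    have h := tendsto_inv_atTop_zero.const_sub (1 : ℝ)
    rw [sub_zero] at h
    refine h.congr' ?_
    filter_upwards [eventually_ne_atTop 0] with M hM
    rw [sub_div, div_self hM, one_div]
  have hg : Tendsto (fun M : ℝ => M ^ (-γ) - 1) atTop (𝓝 (-1)) := by
    simpa using (tendsto_rpow_neg_atTop hγ).sub_const 1
  have hgγ : Tendsto (fun M : ℝ => log (M ^ (-γ) - 1 + 1) / log M) atTop (𝓝 (-γ)) := by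
    refine tendsto_const_nhds.congr' ?_
    filter_upwards [eventually_gt_atTop 1] with M hM
    rw [sub_add_cancel, log_rpow (by positivity), mul_div_cancel_right₀ _ (log_pos hM).ne']
  exact tendsto_transitionTime (by positivity) hf hg hgγ
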